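/- Under the full-support assumption on a multivariate Bernoulli vector X in {0,1}^d, the family (e_A(X_A))_{A ⊆ D} of 2^d random variables is linearly independent, and hence forms a basis of the 2^d-dimensional space of real-valued functions of X. -/
import Mathlib


open Finset

noncomputable section

/-- Marginal probability `P(X_A = x_A)` for a mass function `p` on `{0,1}^d`. -/
def margProb {d : ℕ} (p : (Fin d → Bool) → ℝ) (A : Finset (Fin d)) (x : Fin d → Bool) : ℝ :=
  ∑ y ∈ univ.filter (fun y : Fin d → Bool => ∀ i ∈ A, y i = x i), p y

/-- The family `e_A(x_A) = (-1)^(∑_{j∈A} x_j) / P(X_A = x_A)`. -/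
def eFun {d : ℕ} (p : (Fin d → Bool) → ℝ) (A : Finset (Fin d)) (x : Fin d → Bool) : ℝ :=
  (-1 : ℝ) ^ (∑ j ∈ A, if x j then (1 : ℕ) else 0) / margProb p A x

/-- Expectation of `f(X)` under the mass function `p`. -/
def expec {d : ℕ} (p : (Fin d → Bool) → ℝ) (f : (Fin d → Bool) → ℝ) : ℝ :=
  ∑ x, p x * f x

/-- The signed-sum functional `Δ_B f = ∑_{S ⊆ B} (-1)^{|S|} f(1_S)`. -/
def deltaB {d : ℕ} (B : Finset (Fin d)) (f : (Fin d → Bool) → ℝ) : ℝ :=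
  ∑ S ∈ B.powerset, (-1 : ℝ) ^ S.card * f (fun j => decide (j ∈ S))

lemma margProb_pos {d : ℕ} (p : (Fin d → Bool) → ℝ) (hpos : ∀ x, 0 < p x)
    (A : Finset (Fin d)) (x : Fin d → Bool) : 0 < margProb p A x := by
  refine Finset.sum_pos (fun y _ => hpos y) ⟨x, ?_⟩
  simp

lemma margProb_congr {d : ℕ} (p : (Fin d → Bool) → ℝ) (A : Finset (Fin d))
    {x y : Fin d → Bool} (h : ∀ i ∈ A, x i = y i) : margProb p A x = margProb p A y := by
  unfold margProb
  congr 1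
  apply Finset.filter_congr
  intro z _
  constructor
  · intro hz i hi; rw [hz i hi, h i hi]
  · intro hz i hi; rw [hz i hi, h i hi]

lemma eFun_congr {d : ℕ} (p : (Fin d → Bool) → ℝ) (A : Finset (Fin d))
    {x y : Fin d → Bool} (h : ∀ i ∈ A, x i = y i) : eFun p A x = eFun p A y := by
  unfold eFun
  rw [margProb_congr p A h, Finset.sum_congr rfl (fun j hj => by rw [h j hj])]

lemma deltaB_eFun_eq_zero {d : ℕ} (p : (Fin d → Bool) → ℝ) {A B : Finset (Fin d)}
    (h : ¬ B ⊆ A) : deltaB B (eFun p A) = 0 := by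
  classical
  obtain ⟨j, hjB, hjA⟩ := Finset.not_subset.mp h
  unfold deltaB
  refine Finset.sum_involution
    (fun S _ => if j ∈ S then S.erase j else insert j S) ?_ ?_ ?_ ?_
  · -- terms cancel in pairs
    intro S hS
    have hE : ∀ (T : Finset (Fin d)), (∀ i ∈ A, decide (i ∈ S) = decide (i ∈ T)) →
        eFun p A (fun i => decide (i ∈ S)) = eFun p A (fun i => decide (i ∈ T)) :=
      fun T hT => eFun_congr p A hT
    by_cases hj : j ∈ S
    · simp only [hj, if_true]
      have h1 : eFun p A (fun i => decide (i ∈ S)) =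
          eFun p A (fun i => decide (i ∈ S.erase j)) := by
        apply hE
        intro i hi
        have : i ≠ j := fun hij => hjA (hij ▸ hi)
        simp [Finset.mem_erase, this]
      have h2 : ((-1 : ℝ)) ^ S.card = -(-1 : ℝ) ^ (S.erase j).card := by
        rw [Finset.card_erase_of_mem hj]
        have : S.card = (S.card - 1) + 1 := (Nat.succ_pred_eq_of_pos (Finset.card_pos.mpr ⟨j, hj⟩)).symm
        rw [this, pow_succ]
        ring_nf
        simp [pow_succ]
      rw [h1, h2]
      ring
    · simp only [hj, if_false]
      have h1 : eFun p A (fun i => decide (i ∈ S)) =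
          eFun p A (fun i => decide (i ∈ insert j S)) := by
        apply hE
        intro i hi
        have : i ≠ j := fun hij => hjA (hij ▸ hi)
        simp [Finset.mem_insert, this]
      have h2 : ((-1 : ℝ)) ^ (insert j S).card = -(-1 : ℝ) ^ S.card := by
        rw [Finset.card_insert_of_notMem hj, pow_succ]
        ring
      rw [h1, h2]
      ring
  · -- the involution has no fixed points
    intro S hS _
    by_cases hj : j ∈ S
    · simp only [hj, if_true]
      intro hcon
      have := Finset.notMem_erase j S
      rw [hcon] at this
      exact this hj
    · simp only [hj, if_false]
      intro hcon
      exact hj (hcon ▸ Finset.mem_insert_self j S)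
  · -- the involution maps the powerset into itself
    intro S hS
    rw [Finset.mem_powerset] at hS ⊢
    by_cases hj : j ∈ S
    · simp only [hj, if_true]
      exact (Finset.erase_subset j S).trans hS
    · simp only [hj, if_false]
      exact Finset.insert_subset hjB hS
  · -- it is an involution
    intro S hS
    by_cases hj : j ∈ S
    · simp [hj, Finset.notMem_erase, Finset.insert_erase hj]
    · simp [hj, Finset.erase_insert hj]

lemma deltaB_eFun_self_pos {d : ℕ} (p : (Fin d → Bool) → ℝ) (hpos : ∀ x, 0 < p x)
    (B : Finset (Fin d)) : 0 < deltaB B (eFun p B) := by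
  classical
  unfold deltaB
  have key : ∀ S ∈ B.powerset,
      (-1 : ℝ) ^ S.card * eFun p B (fun j => decide (j ∈ S)) =
        1 / margProb p B (fun j => decide (j ∈ S)) := by
    intro S hS
    rw [Finset.mem_powerset] at hS
    unfold eFun
    have hexp : (∑ j ∈ B, if (decide (j ∈ S) : Bool) then (1 : ℕ) else 0) = S.card := by
      simp only [decide_eq_true_eq]
      rw [Finset.sum_ite_mem, Finset.inter_eq_right.mpr hS]
      simp
    rw [hexp, div_eq_mul_inv, ← mul_assoc, ← pow_add, ← two_mul, pow_mul]
    norm_num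
  rw [Finset.sum_congr rfl key]
  refine Finset.sum_pos (fun S _ => one_div_pos.mpr (margProb_pos p hpos B _)) ?_
  · exact ⟨∅, Finset.empty_mem_powerset B⟩

lemma deltaB_sum {d : ℕ} (p : (Fin d → Bool) → ℝ) (g : Finset (Fin d) → ℝ)
    (h : ∑ A, g A • eFun p A = 0) (B : Finset (Fin d)) :
    ∑ A, g A * deltaB B (eFun p A) = 0 := by
  classical
  unfold deltaB
  simp_rw [Finset.mul_sum]
  rw [Finset.sum_comm]
  refine Finset.sum_eq_zero ?_
  intro S _
  have h0 : (∑ A, g A • eFun p A) (fun j => decide (j ∈ S)) = 0 := by rw [h]; rfl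
  rw [Finset.sum_apply] at h0
  simp only [Pi.smul_apply, smul_eq_mul] at h0
  calc ∑ A, g A * ((-1 : ℝ) ^ S.card * eFun p A (fun j => decide (j ∈ S)))
      = (-1 : ℝ) ^ S.card * ∑ A, g A * eFun p A (fun j => decide (j ∈ S)) := by
        rw [Finset.mul_sum]; congr 1; ext A; ring
    _ = 0 := by rw [h0, mul_zero]

/-- Under full support, the family `(e_A(X_A))_{A ⊆ D}` of `2^d` functions of `X` is
linearly independent and spans the `2^d`-dimensional space of real-valued
functions of `X`, hence forms a basis. -/
theorem eFun_linearIndependent_and_spans {d : ℕ}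
    (p : (Fin d → Bool) → ℝ) (hpos : ∀ x, 0 < p x) (hsum : ∑ x, p x = 1) :
    LinearIndependent ℝ (fun A : Finset (Fin d) => eFun p A) ∧
    Submodule.span ℝ (Set.range (fun A : Finset (Fin d) => eFun p A)) = ⊤ := by
  classical
  have hli : LinearIndependent ℝ (fun A : Finset (Fin d) => eFun p A) := by
    rw [Fintype.linearIndependent_iff]
    intro g h
    -- core step: g B = 0 provided g vanishes on all strict supersets of B
    have main : ∀ B : Finset (Fin d), (∀ A, B ⊂ A → g A = 0) → g B = 0 := by
      intro B hB
      have h0 := deltaB_sum p g h B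
      have hsingle : ∑ A, g A * deltaB B (eFun p A) = g B * deltaB B (eFun p B) := by
        refine Finset.sum_eq_single B ?_ (by simp)
        intro A _ hAB
        by_cases hBA : B ⊆ A
        · have : B ⊂ A := HasSubset.Subset.ssubset_of_ne hBA (Ne.symm hAB)
          rw [hB A this, zero_mul]
        · rw [deltaB_eFun_eq_zero p hBA, mul_zero]
      rw [hsingle] at h0
      exact (mul_eq_zero.mp h0).resolve_right (ne_of_gt (deltaB_eFun_self_pos p hpos B))
    -- downward induction on the cardinality deficit
    have key : ∀ n, ∀ B : Finset (Fin d), d - B.card = n → g B = 0 := by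
      intro n
      induction n using Nat.strong_induction_on with
      | _ n ih =>
        intro B hBn
        refine main B ?_
        intro A hA
        have hcard : B.card < A.card := Finset.card_lt_card hA
        have hAd : A.card ≤ d := by
          have := Finset.card_le_univ A
          simpa using this
        exact ih (d - A.card) (by omega) A rfl
    intro A
    exact key (d - A.card) A rfl
  refine ⟨hli, ?_⟩
  apply hli.span_eq_top_of_card_eq_finrank
  simp [Module.finrank_pi]

end
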